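/- arXiv:2302.09128 — 2 statements merged into one kernel-verified Lean document; each statement's English description precedes it below -/
import Mathlib

section
/- Set K := σ_lb/σ_ub and suppose θ ∈ (0,1) and η ∈ (0,1) satisfy (1 − θ)(1 − η)K − η > 0. If ‖g − ∇φ(x)‖ ≤ η‖∇φ(x)‖ and 0 < α ≤ 2((1 − θ)(1 − η)K − η)/(L σ_ub (1 − η)), then φ(x − α d) ≤ φ(x) − α θ ⟨d, g⟩, where d := B⁻¹g. -/
/-!
By the descent lemma for an `L`-smooth `φ`,
`φ (x - α d) ≤ φ x - α ⟪∇φ x, d⟫ + L α² ‖d‖² / 2`. Writing `g = B d`, the eigenvalue bounds on `B`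
give `⟪d, g⟫ ≥ σlb ‖g‖²` and `‖d‖ ≤ σub ‖g‖`, while the relative gradient error gives
`‖g - ∇φ x‖ ≤ η / (1 - η) ‖g‖`, hence `⟪∇φ x, d⟫ ≥ ⟪d, g⟫ - η / (1 - η) ‖g‖ ‖d‖`.
Everything is then a multiple of `‖g‖²`, and the bound on `α` is exactly what makes the
quadratic term smaller than the `(1 - θ)` share of the linear one.
-/

open scoped RealInnerProductSpace
open Matrix

namespace OrthonormalBasis

variable {ι E : Type*} [Fintype ι] [NormedAddCommGroup E] [InnerProductSpace ℝ E]
  (e : OrthonormalBasis ι ℝ E) {T : E →ₗ[ℝ] E} {μ : ι → ℝ}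

lemma repr_apply_of_apply_eq_smul (hT : ∀ i, T (e i) = μ i • e i) (v : E) (i : ι) :
    e.repr (T v) i = μ i * e.repr v i := by
  classical
  conv_lhs => rw [← e.sum_repr v]
  simp [map_sum, hT, smul_smul, e.repr_self, Finset.sum_apply, Pi.single_apply, mul_comm]

lemma inner_apply_self_eq_sum (hT : ∀ i, T (e i) = μ i • e i) (v : E) :
    ⟪T v, v⟫ = ∑ i, μ i * e.repr v i ^ 2 := by
  rw [← e.repr.inner_map_map, PiLp.inner_apply]
  simp only [e.repr_apply_of_apply_eq_smul hT, RCLike.inner_apply, Real.ringHom_apply]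
  exact Finset.sum_congr rfl fun i _ => by ring

lemma norm_apply_sq_eq_sum (hT : ∀ i, T (e i) = μ i • e i) (v : E) :
    ‖T v‖ ^ 2 = ∑ i, (μ i * e.repr v i) ^ 2 := by
  rw [← e.repr.norm_map, EuclideanSpace.real_norm_sq_eq]
  simp [e.repr_apply_of_apply_eq_smul hT]

lemma norm_sq_eq_sum_repr (v : E) : ‖v‖ ^ 2 = ∑ i, e.repr v i ^ 2 := by
  rw [← e.repr.norm_map, EuclideanSpace.real_norm_sq_eq]

lemma mul_norm_sq_le_inner_apply_self {a : ℝ} (hT : ∀ i, T (e i) = μ i • e i)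
    (ha : ∀ i, a ≤ μ i) (v : E) : a * ‖v‖ ^ 2 ≤ ⟪T v, v⟫ := by
  rw [e.inner_apply_self_eq_sum hT, e.norm_sq_eq_sum_repr, Finset.mul_sum]
  exact Finset.sum_le_sum fun i _ => mul_le_mul_of_nonneg_right (ha i) (sq_nonneg _)

lemma norm_apply_sq_le_mul_inner_apply_self {b : ℝ} (hT : ∀ i, T (e i) = μ i • e i)
    (hμ : ∀ i, 0 ≤ μ i ∧ μ i ≤ b) (v : E) : ‖T v‖ ^ 2 ≤ b * ⟪T v, v⟫ := by
  rw [e.inner_apply_self_eq_sum hT, e.norm_apply_sq_eq_sum hT, Finset.mul_sum]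
  refine Finset.sum_le_sum fun i _ => ?_
  have : μ i ^ 2 ≤ b * μ i := by nlinarith [hμ i]
  nlinarith [sq_nonneg (e.repr v i)]

end OrthonormalBasis

namespace Matrix

variable {n : Type*} [Fintype n] [DecidableEq n] {B : Matrix n n ℝ}

lemma IsHermitian.toEuclideanLin_eigenvectorBasis (hB : B.IsHermitian) (i : n) :
    toEuclideanLin B (hB.eigenvectorBasis i) = hB.eigenvalues i • hB.eigenvectorBasis i := by
  simp [toLpLin_apply, hB.mulVec_eigenvectorBasis]

lemma toEuclideanLin_apply_toEuclideanLin_inv (hB : IsUnit B.det) (g : EuclideanSpace ℝ n) :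
    toEuclideanLin B (toEuclideanLin B⁻¹ g) = g := by
  rw [← LinearMap.comp_apply, ← toLpLin_mul_same, mul_nonsing_inv B hB, toLpLin_one,
    LinearMap.id_apply]

lemma PosDef.inv_mul_norm_sq_le_inner_toEuclideanLin_inv (hB : B.PosDef) {b : ℝ} (hb : 0 < b)
    (heig : ∀ i, hB.isHermitian.eigenvalues i ≤ b) (g : EuclideanSpace ℝ n) :
    b⁻¹ * ‖g‖ ^ 2 ≤ ⟪toEuclideanLin B⁻¹ g, g⟫ := by
  set d := toEuclideanLin B⁻¹ g
  have hBd : toEuclideanLin B d = g :=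
    toEuclideanLin_apply_toEuclideanLin_inv hB.det_pos.ne'.isUnit g
  have := hB.isHermitian.eigenvectorBasis.norm_apply_sq_le_mul_inner_apply_self
    hB.isHermitian.toEuclideanLin_eigenvectorBasis
    (fun i => ⟨(hB.eigenvalues_pos i).le, heig i⟩) d
  rw [hBd, real_inner_comm] at this
  rwa [inv_mul_le_iff₀ hb]

lemma PosDef.norm_toEuclideanLin_inv_le (hB : B.PosDef) {a : ℝ} (ha : 0 < a)
    (heig : ∀ i, a ≤ hB.isHermitian.eigenvalues i) (g : EuclideanSpace ℝ n) :
    ‖toEuclideanLin B⁻¹ g‖ ≤ a⁻¹ * ‖g‖ := by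
  set d := toEuclideanLin B⁻¹ g
  have hBd : toEuclideanLin B d = g :=
    toEuclideanLin_apply_toEuclideanLin_inv hB.det_pos.ne'.isUnit g
  have hcoer : a * ‖d‖ ^ 2 ≤ ‖g‖ * ‖d‖ := calc
    a * ‖d‖ ^ 2 ≤ ⟪toEuclideanLin B d, d⟫ :=
      hB.isHermitian.eigenvectorBasis.mul_norm_sq_le_inner_apply_self
        hB.isHermitian.toEuclideanLin_eigenvectorBasis heig d
    _ ≤ ‖g‖ * ‖d‖ := hBd ▸ real_inner_le_norm _ _
  rw [le_inv_mul_iff₀ ha]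
  nlinarith [norm_nonneg d, norm_nonneg g]

end Matrix

section Descent

variable {E : Type*} [NormedAddCommGroup E] [InnerProductSpace ℝ E] [CompleteSpace E]
  {φ : E → ℝ} {L : ℝ}

lemma hasDerivAt_comp_add_smul (hφ : Differentiable ℝ φ) (x v : E) (t : ℝ) :
    HasDerivAt (fun t : ℝ => φ (x + t • v)) ⟪gradient φ (x + t • v), v⟫ t := by
  have hline : HasDerivAt (fun t : ℝ => x + t • v) v t := by
    simpa using ((hasDerivAt_id t).smul_const v).const_add x
  have := (hφ _).hasGradientAt.hasFDerivAt.comp_hasDerivAt t hline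
  simp only [toDual_gradient, inner_gradient_left] at this ⊢
  exact this

lemma le_add_inner_gradient_add_sq (hφ : Differentiable ℝ φ)
    (hlip : ∀ a b, ‖gradient φ a - gradient φ b‖ ≤ L * ‖a - b‖) (x v : E) :
    φ (x + v) ≤ φ x + ⟪gradient φ x, v⟫ + L / 2 * ‖v‖ ^ 2 := by
  set h : ℝ → ℝ := fun t => φ (x + t • v) - t * ⟪gradient φ x, v⟫ - L / 2 * ‖v‖ ^ 2 * t ^ 2
  have hh : ∀ t, HasDerivAt h
      (⟪gradient φ (x + t • v), v⟫ - ⟪gradient φ x, v⟫ - L * ‖v‖ ^ 2 * t) t := fun t => by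
    refine (((hasDerivAt_comp_add_smul hφ x v t).sub
      (hasDerivAt_mul_const ⟪gradient φ x, v⟫)).sub
      ((hasDerivAt_pow 2 t).const_mul (L / 2 * ‖v‖ ^ 2))).congr_deriv ?_
    push_cast
    ring
  have hanti : AntitoneOn h (Set.Icc 0 1) := by
    refine antitoneOn_of_hasDerivWithinAt_nonpos (convex_Icc 0 1)
      (fun t _ => (hh t).continuousAt.continuousWithinAt) (fun t _ => (hh t).hasDerivWithinAt)
      fun t ht => ?_
    rw [interior_Icc] at ht
    have hgrad : ‖gradient φ (x + t • v) - gradient φ x‖ ≤ L * t * ‖v‖ := by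
      simpa [norm_smul, abs_of_pos ht.1, mul_assoc] using hlip (x + t • v) x
    calc ⟪gradient φ (x + t • v), v⟫ - ⟪gradient φ x, v⟫ - L * ‖v‖ ^ 2 * t
        = ⟪gradient φ (x + t • v) - gradient φ x, v⟫ - L * t * ‖v‖ * ‖v‖ := by
          rw [inner_sub_left]; ring
      _ ≤ ‖gradient φ (x + t • v) - gradient φ x‖ * ‖v‖ - L * t * ‖v‖ * ‖v‖ := by
          gcongr; exact real_inner_le_norm _ _
      _ ≤ 0 := by nlinarith [norm_nonneg v]
  have := hanti (Set.left_mem_Icc.2 zero_le_one) (Set.right_mem_Icc.2 zero_le_one) zero_le_one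
  simp only [h, one_smul, zero_smul, add_zero] at this
  linarith

lemma le_sub_smul_of_lipschitz_gradient (hφ : Differentiable ℝ φ)
    (hlip : ∀ a b, ‖gradient φ a - gradient φ b‖ ≤ L * ‖a - b‖) (x d : E) (α : ℝ) :
    φ (x - α • d) ≤ φ x - α * ⟪gradient φ x, d⟫ + L / 2 * α ^ 2 * ‖d‖ ^ 2 := by
  have := le_add_inner_gradient_add_sq hφ hlip x (-(α • d))
  rwa [← sub_eq_add_neg, inner_neg_right, real_inner_smul_right, norm_neg, norm_smul,
    Real.norm_eq_abs, mul_pow, sq_abs, ← sub_eq_add_neg, ← mul_assoc] at this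

end Descent

lemma norm_sub_le_div_one_sub_mul_norm {E : Type*} [SeminormedAddCommGroup E] {g G : E} {η : ℝ}
    (hη0 : 0 ≤ η) (hη1 : η < 1) (hg : ‖g - G‖ ≤ η * ‖G‖) :
    ‖g - G‖ ≤ η / (1 - η) * ‖g‖ := by
  have hG : ‖G‖ ≤ ‖g‖ + ‖g - G‖ := by simpa using norm_sub_le g (g - G)
  rw [div_mul_eq_mul_div, le_div_iff₀ (by linarith)]
  nlinarith [norm_nonneg G]

lemma inner_sub_mul_norm_le_inner_of_norm_sub_le {E : Type*} [NormedAddCommGroup E]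
    [InnerProductSpace ℝ E] {g G : E} {η : ℝ} (hη0 : 0 ≤ η) (hη1 : η < 1)
    (hg : ‖g - G‖ ≤ η * ‖G‖) (d : E) :
    ⟪d, g⟫ - η / (1 - η) * ‖g‖ * ‖d‖ ≤ ⟪G, d⟫ := by
  have hgG : ⟪g - G, d⟫ ≤ η / (1 - η) * ‖g‖ * ‖d‖ := (real_inner_le_norm _ _).trans <|
    mul_le_mul_of_nonneg_right (norm_sub_le_div_one_sub_mul_norm hη0 hη1 hg) (norm_nonneg d)
  rw [inner_sub_left, real_inner_comm] at hgG
  linarith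

lemma half_mul_sq_le_of_le_step_size {L σlb σub K θ η α : ℝ} (hL : 0 < L) (hσub : 0 < σub)
    (hη1 : η < 1) (hK : K = σlb / σub)
    (hα : α ≤ 2 * ((1 - θ) * (1 - η) * K - η) / (L * σub * (1 - η))) :
    L * α / 2 * σub ^ 2 ≤ (1 - θ) * σlb - η / (1 - η) * σub := by
  have h1η : 0 < 1 - η := by linarith
  rw [le_div_iff₀ (by positivity)] at hα
  have hKσ : σlb = K * σub := by rw [hK]; field_simp
  have hslack : (1 - θ) * σlb - η / (1 - η) * σub - L * α / 2 * σub ^ 2 =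
      σub / (2 * (1 - η)) * (2 * ((1 - θ) * (1 - η) * K - η) - α * (L * σub * (1 - η))) := by
    rw [hKσ]; field_simp
  rw [← sub_nonneg, hslack]
  exact mul_nonneg (div_nonneg hσub.le (by linarith)) (by linarith)

theorem stmt4_general {n : ℕ}
    (φ : EuclideanSpace ℝ (Fin n) → ℝ) (hφ : ContDiff ℝ 1 φ)
    (L : ℝ) (hL : 0 < L)
    (hlip : ∀ a b, ‖gradient φ a - gradient φ b‖ ≤ L * ‖a - b‖)
    (B : Matrix (Fin n) (Fin n) ℝ) (hB : B.IsHermitian) (hPD : B.PosDef)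
    (σlbB σubB σlb σub K : ℝ) (h0 : 0 < σlbB) (hord : σlbB ≤ σubB)
    (heig : ∀ i, σlbB ≤ hB.eigenvalues i ∧ hB.eigenvalues i ≤ σubB)
    (hσlb : σlb = 1 / σubB) (hσub : σub = 1 / σlbB) (hK : K = σlb / σub)
    (x g : EuclideanSpace ℝ (Fin n))
    (θ : ℝ) (hθ : θ ∈ Set.Ioo (0 : ℝ) 1)
    (η : ℝ) (hη : η ∈ Set.Ioo (0 : ℝ) 1)
    (α : ℝ) (hα0 : 0 < α)
    (hg : ‖g - gradient φ x‖ ≤ η * ‖gradient φ x‖)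
    (hαub : α ≤ 2 * ((1 - θ) * (1 - η) * K - η) / (L * σub * (1 - η))) :
    φ (x - α • Matrix.toEuclideanLin B⁻¹ g) ≤
      φ x - α * θ * ⟪Matrix.toEuclideanLin B⁻¹ g, g⟫ := by
  obtain ⟨-, hθ1⟩ := hθ
  obtain ⟨hη0, hη1⟩ := hη
  rw [one_div] at hσlb hσub
  have hσub0 : 0 < σub := hσub ▸ inv_pos.2 h0
  set d := toEuclideanLin B⁻¹ g
  set r := η / (1 - η)
  have hr : 0 ≤ r := div_nonneg hη0.le (by linarith)
  have hd : ‖d‖ ≤ σub * ‖g‖ := hσub ▸ hPD.norm_toEuclideanLin_inv_le h0 (fun i => (heig i).1) g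
  have hp : σlb * ‖g‖ ^ 2 ≤ ⟪d, g⟫ := hσlb ▸
    hPD.inv_mul_norm_sq_le_inner_toEuclideanLin_inv (h0.trans_le hord) (fun i => (heig i).2) g
  have hGd := inner_sub_mul_norm_le_inner_of_norm_sub_le hη0.le hη1 hg d
  have hα := half_mul_sq_le_of_le_step_size hL hσub0 hη1 hK hαub
  have hdecrease : L / 2 * α ^ 2 * ‖d‖ ^ 2 ≤ α * (⟪gradient φ x, d⟫ - θ * ⟪d, g⟫) := calc
    L / 2 * α ^ 2 * ‖d‖ ^ 2 = α * (L * α / 2 * ‖d‖ ^ 2) := by ring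
    _ ≤ α * (L * α / 2 * (σub * ‖g‖) ^ 2) := by gcongr
    _ = α * (L * α / 2 * σub ^ 2 * ‖g‖ ^ 2) := by ring
    _ ≤ α * (((1 - θ) * σlb - r * σub) * ‖g‖ ^ 2) := by gcongr
    _ ≤ α * ((1 - θ) * ⟪d, g⟫ - r * ‖g‖ * ‖d‖) := by
      gcongr
      nlinarith [mul_le_mul_of_nonneg_left hp (sub_nonneg.2 hθ1.le),
        mul_le_mul_of_nonneg_left hd (mul_nonneg hr (norm_nonneg g))]
    _ ≤ α * (⟪gradient φ x, d⟫ - θ * ⟪d, g⟫) := mul_le_mul_of_nonneg_left (by linarith) hα0.le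
  linarith [le_sub_smul_of_lipschitz_gradient (hφ.differentiable one_ne_zero) hlip x d α]

/-- With `K := σlb/σub`, if `(1 − θ)(1 − η)K − η > 0`,
`‖g − ∇φ(x)‖ ≤ η ‖∇φ(x)‖` and `0 < α ≤ 2((1 − θ)(1 − η)K − η)/(L σub (1 − η))`, then
`φ(x − α d) ≤ φ(x) − α θ ⟨d, g⟩` where `d := B⁻¹ g`. -/
theorem stmt4 {n : ℕ} (hn : 1 ≤ n)
    (φ : EuclideanSpace ℝ (Fin n) → ℝ) (hφ : ContDiff ℝ 1 φ)
    (L : ℝ) (hL : 0 < L)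
    (hlip : ∀ a b, ‖gradient φ a - gradient φ b‖ ≤ L * ‖a - b‖)
    (B : Matrix (Fin n) (Fin n) ℝ) (hB : B.IsHermitian) (hPD : B.PosDef)
    (σlbB σubB σlb σub K : ℝ) (h0 : 0 < σlbB) (hord : σlbB ≤ σubB)
    (heig : ∀ i, σlbB ≤ hB.eigenvalues i ∧ hB.eigenvalues i ≤ σubB)
    (hσlb : σlb = 1 / σubB) (hσub : σub = 1 / σlbB) (hK : K = σlb / σub)
    (x g : EuclideanSpace ℝ (Fin n))
    (θ : ℝ) (hθ : θ ∈ Set.Ioo (0 : ℝ) 1)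
    (η : ℝ) (hη : η ∈ Set.Ioo (0 : ℝ) 1)
    (hpos : 0 < (1 - θ) * (1 - η) * K - η)
    (α : ℝ) (hα0 : 0 < α)
    (hg : ‖g - gradient φ x‖ ≤ η * ‖gradient φ x‖)
    (hαub : α ≤ 2 * ((1 - θ) * (1 - η) * K - η) / (L * σub * (1 - η))) :
    φ (x - α • Matrix.toEuclideanLin B⁻¹ g) ≤
      φ x - α * θ * ⟪Matrix.toEuclideanLin B⁻¹ g, g⟫ :=
  stmt4_general φ hφ L hL hlip B hB hPD σlbB σubB σlb σub K h0 hord heig hσlb hσub hK x g θ hθ η hη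
    α hα0 hg hαub
end

section
/- Suppose φ is β-strongly convex (β > 0) with global minimum value φ*. Let d := B⁻¹g, α > 0, θ ∈ (0,1), x⁺ := x − α d, and let f, f⁺ ∈ ℝ satisfy e + e⁺ ≤ 2ε_f where e := |f − φ(x)|, e⁺ := |f⁺ − φ(x⁺)| and ε_f ≥ 0. Assume f⁺ ≤ f − α θ ⟨d, g⟩ + 2ε_f, that either ‖g − ∇φ(x)‖ ≤ τ‖g‖ for some τ ≥ 0 or ‖g − ∇φ(x)‖ ≤ η‖∇φ(x)‖ for some η ∈ (0,1), and that φ(x) − φ* > ε for some ε ≥ 4ε_f. Define m := min{1/(1 + τ)², (1 − η)²} · α θ σ_lb β. Then φ(x⁺) − φ* ≤ (1 − m)(1 + (2ε_f + e + e⁺)/ε)(φ(x) − φ*). -/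
/-!
Strong convexity at a minimiser gives the Polyak–Łojasiewicz inequality
`2β(φ(x) − φ*) ≤ ‖∇φ(x)‖²`. Either accuracy condition bounds
`min{1/(1+τ)², (1−η)²} ‖∇φ(x)‖²` by `‖g‖²`, and expanding in an eigenbasis of `B` gives
`⟨B⁻¹g, g⟩ ≥ σ_lb ‖g‖²`. Read through the noise `e, e⁺`, the sufficient-decrease test therefore
yields `φ(x⁺) − φ* ≤ (1 − 2m)(φ(x) − φ*) + (2ε_f + e + e⁺)`. Since the noise is at most
`ε < φ(x) − φ*`, it is absorbed into the factor `1 + (2ε_f + e + e⁺)/ε` at the price of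
weakening `1 − 2m` to `1 − m`.
-/

open scoped RealInnerProductSpace
open Matrix

theorem OrthonormalBasis.mul_norm_sq_le_inner_map_self {ι E : Type*} [Fintype ι]
    [NormedAddCommGroup E] [InnerProductSpace ℝ E] (b : OrthonormalBasis ι ℝ E)
    {T : E →ₗ[ℝ] E} {μ : ι → ℝ} (hT : ∀ j, T (b j) = μ j • b j) {c : ℝ} (hc : ∀ j, c ≤ μ j)
    (x : E) : c * ‖x‖ ^ 2 ≤ ⟪T x, x⟫ := by
  have hTx : T x = ∑ j, (μ j * ⟪b j, x⟫) • b j := by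
    conv_lhs => rw [← b.sum_repr' x]
    simp only [map_sum, map_smul, hT, smul_smul, mul_comm]
  calc c * ‖x‖ ^ 2 = ∑ j, c * ⟪b j, x⟫ ^ 2 := by rw [← b.sum_sq_inner_right, Finset.mul_sum]
    _ ≤ ∑ j, μ j * ⟪b j, x⟫ ^ 2 := by gcongr with j; exact hc j
    _ = ⟪T x, x⟫ := by
      simp only [hTx, sum_inner, real_inner_smul_left]
      exact Finset.sum_congr rfl fun j _ => by ring

theorem Matrix.PosDef.toEuclideanLin_inv_eigenvectorBasis {n : Type*} [Fintype n] [DecidableEq n]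
    {B : Matrix n n ℝ} (hB : B.PosDef) (j : n) :
    toEuclideanLin B⁻¹ (hB.isHermitian.eigenvectorBasis j) =
      (hB.isHermitian.eigenvalues j)⁻¹ • hB.isHermitian.eigenvectorBasis j := by
  have hne : hB.isHermitian.eigenvalues j ≠ 0 := (hB.eigenvalues_pos j).ne'
  apply WithLp.ofLp_injective
  rw [ofLp_toLpLin, toLin'_apply, WithLp.ofLp_smul, ← inv_smul_smul₀ hne (B⁻¹ *ᵥ _),
    ← mulVec_smul, ← hB.isHermitian.mulVec_eigenvectorBasis, mulVec_mulVec,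
    nonsing_inv_mul B hB.det_pos.ne'.isUnit, one_mulVec]

theorem Matrix.PosDef.inv_mul_norm_sq_le_inner_toEuclideanLin_inv_s10 {n : Type*} [Fintype n]
    [DecidableEq n] {B : Matrix n n ℝ} (hB : B.PosDef) {c : ℝ}
    (hc : ∀ i, hB.isHermitian.eigenvalues i ≤ c) (x : EuclideanSpace ℝ n) :
    c⁻¹ * ‖x‖ ^ 2 ≤ ⟪toEuclideanLin B⁻¹ x, x⟫ :=
  hB.isHermitian.eigenvectorBasis.mul_norm_sq_le_inner_map_self
    hB.toEuclideanLin_inv_eigenvectorBasis (fun j => inv_anti₀ (hB.eigenvalues_pos j) (hc j)) x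

theorem two_mul_mul_sub_le_norm_sq_of_strongConvex_bound {E : Type*} [NormedAddCommGroup E]
    [InnerProductSpace ℝ E] {φ : E → ℝ} {G x z : E} {β : ℝ} (hβ : 0 < β)
    (h : φ x + ⟪G, z - x⟫ + β / 2 * ‖z - x‖ ^ 2 ≤ φ z) :
    2 * β * (φ x - φ z) ≤ ‖G‖ ^ 2 := by
  have hCS : -(‖G‖ * ‖z - x‖) ≤ ⟪G, z - x⟫ := neg_le_of_abs_le (abs_real_inner_le_norm G (z - x))
  nlinarith [sq_nonneg (‖G‖ - β * ‖z - x‖)]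

theorem min_mul_norm_sq_le_norm_sq_of_norm_sub_le {E : Type*} [SeminormedAddCommGroup E]
    {g G : E} {τ η : ℝ} (hτ : 0 ≤ τ) (hη : η < 1)
    (h : ‖g - G‖ ≤ τ * ‖g‖ ∨ ‖g - G‖ ≤ η * ‖G‖) :
    min (1 / (1 + τ) ^ 2) ((1 - η) ^ 2) * ‖G‖ ^ 2 ≤ ‖g‖ ^ 2 := by
  have hG : ‖G‖ ≤ ‖g‖ + ‖g - G‖ := by simpa [norm_sub_rev] using norm_le_norm_add_norm_sub' G g
  rcases h with h | h
  · have hle : ‖G‖ ^ 2 ≤ ((1 + τ) * ‖g‖) ^ 2 := by gcongr; linarith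
    calc min (1 / (1 + τ) ^ 2) ((1 - η) ^ 2) * ‖G‖ ^ 2 ≤ 1 / (1 + τ) ^ 2 * ((1 + τ) * ‖g‖) ^ 2 := by
          gcongr
          exact min_le_left _ _
      _ = ‖g‖ ^ 2 := by field_simp
  · have hle : ((1 - η) * ‖G‖) ^ 2 ≤ ‖g‖ ^ 2 :=
      pow_le_pow_left₀ (mul_nonneg (by linarith) (norm_nonneg G)) (by linarith) 2
    calc min (1 / (1 + τ) ^ 2) ((1 - η) ^ 2) * ‖G‖ ^ 2 ≤ (1 - η) ^ 2 * ‖G‖ ^ 2 := by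
          gcongr
          exact min_le_right _ _
      _ ≤ ‖g‖ ^ 2 := by rwa [mul_pow] at hle

theorem le_one_sub_mul_one_add_div_mul {v a m N ε : ℝ} (hv : 0 ≤ v) (hva : v ≤ (1 - 2 * m) * a + N)
    (hm : 0 ≤ m) (hN : 0 ≤ N) (hNε : N ≤ ε) (hεa : ε < a) :
    v ≤ (1 - m) * (1 + N / ε) * a := by
  rcases (hN.trans hNε).lt_or_eq with hε | rfl
  · have hm1 : m ≤ 1 := by nlinarith
    have hNa : N ≤ N / ε * a := by
      rw [div_mul_eq_mul_div, le_div_iff₀ hε]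
      nlinarith
    calc v ≤ (1 - m) * a + (1 - m) * N + m * (N - a) := by linarith
      _ ≤ (1 - m) * a + (1 - m) * (N / ε * a) := by nlinarith
      _ = (1 - m) * (1 + N / ε) * a := by ring
  · obtain rfl : N = 0 := le_antisymm hNε hN
    simp only [div_zero, add_zero, mul_one]
    nlinarith

theorem stmt10_general {n : ℕ}
    (φ : EuclideanSpace ℝ (Fin n) → ℝ)
    (β : ℝ) (hβ : 0 < β)
    (hsc : ∀ a b : EuclideanSpace ℝ (Fin n),
      φ b + ⟪gradient φ b, a - b⟫ + β / 2 * ‖a - b‖ ^ 2 ≤ φ a)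
    (φstar : ℝ) (hlb : ∀ y, φstar ≤ φ y) (hatt : ∃ z, φ z = φstar)
    (B : Matrix (Fin n) (Fin n) ℝ) (hB : B.IsHermitian) (hPD : B.PosDef)
    (σlbB σubB σlb : ℝ) (h0 : 0 < σlbB) (hord : σlbB ≤ σubB)
    (heig : ∀ i, σlbB ≤ hB.eigenvalues i ∧ hB.eigenvalues i ≤ σubB)
    (hσlb : σlb = 1 / σubB)
    (x g : EuclideanSpace ℝ (Fin n))
    (α : ℝ) (hα0 : 0 < α) (θ : ℝ) (hθ : θ ∈ Set.Ioo (0 : ℝ) 1)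
    (εf : ℝ) (hεf : 0 ≤ εf) (f fplus : ℝ)
    (hnoise : |f - φ x| + |fplus - φ (x - α • Matrix.toEuclideanLin B⁻¹ g)| ≤ 2 * εf)
    (hsucc : fplus ≤ f - α * θ * ⟪Matrix.toEuclideanLin B⁻¹ g, g⟫ + 2 * εf)
    (τ : ℝ) (hτ : 0 ≤ τ) (η : ℝ) (hη : η ∈ Set.Ioo (0 : ℝ) 1)
    (hg : ‖g - gradient φ x‖ ≤ τ * ‖g‖ ∨ ‖g - gradient φ x‖ ≤ η * ‖gradient φ x‖)
    (ε : ℝ) (hε : 4 * εf ≤ ε) (hgap : ε < φ x - φstar)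
    (m : ℝ) (hm : m = min (1 / (1 + τ) ^ 2) ((1 - η) ^ 2) * (α * θ * σlb * β)) :
    φ (x - α • Matrix.toEuclideanLin B⁻¹ g) - φstar ≤
      (1 - m) * (1 + (2 * εf + |f - φ x| +
        |fplus - φ (x - α • Matrix.toEuclideanLin B⁻¹ g)|) / ε) * (φ x - φstar) := by
  obtain ⟨z, rfl⟩ := hatt
  set d := toEuclideanLin B⁻¹ g
  set μ := min (1 / (1 + τ) ^ 2) ((1 - η) ^ 2)
  have hθ0 := hθ.1
  have hσlb0 : 0 ≤ σlb := by rw [hσlb]; exact one_div_nonneg.2 (h0.trans_le hord).le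
  have hPL : 2 * β * (φ x - φ z) ≤ ‖gradient φ x‖ ^ 2 :=
    two_mul_mul_sub_le_norm_sq_of_strongConvex_bound hβ (hsc z x)
  have hacc : μ * ‖gradient φ x‖ ^ 2 ≤ ‖g‖ ^ 2 :=
    min_mul_norm_sq_le_norm_sq_of_norm_sub_le hτ hη.2 hg
  have hcurv : σlb * ‖g‖ ^ 2 ≤ ⟪d, g⟫ := by
    rw [hσlb, one_div]
    exact hPD.inv_mul_norm_sq_le_inner_toEuclideanLin_inv_s10 (fun i => (heig i).2) g
  have hμ : 0 ≤ μ := by positivity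
  have hdescent : 2 * m * (φ x - φ z) ≤ α * θ * ⟪d, g⟫ :=
    calc 2 * m * (φ x - φ z) = α * θ * (σlb * (μ * (2 * β * (φ x - φ z)))) := by rw [hm]; ring
      _ ≤ α * θ * (σlb * ‖g‖ ^ 2) := by gcongr; exact (mul_le_mul_of_nonneg_left hPL hμ).trans hacc
      _ ≤ α * θ * ⟪d, g⟫ := by gcongr
  refine le_one_sub_mul_one_add_div_mul (sub_nonneg.2 (hlb _)) ?_ (by rw [hm]; positivity)
    (by positivity) (by linarith) hgap
  linarith [le_abs_self (f - φ x), neg_abs_le (fplus - φ (x - α • d))]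

/-- Claim 3 in the proof of Proposition 4.8: on a true, successful iteration
in the strongly convex case,
`φ(x⁺) − φ* ≤ (1 − m)(1 + (2ε_f + e + e⁺)/ε)(φ(x) − φ*)` where
`m := min{1/(1+τ)², (1−η)²} · α θ σlb β`. -/
theorem stmt10 {n : ℕ} (hn : 1 ≤ n)
    (φ : EuclideanSpace ℝ (Fin n) → ℝ) (hφ : ContDiff ℝ 1 φ)
    (β : ℝ) (hβ : 0 < β)
    (hsc : ∀ a b : EuclideanSpace ℝ (Fin n),
      φ b + ⟪gradient φ b, a - b⟫ + β / 2 * ‖a - b‖ ^ 2 ≤ φ a)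
    (φstar : ℝ) (hlb : ∀ y, φstar ≤ φ y) (hatt : ∃ z, φ z = φstar)
    (B : Matrix (Fin n) (Fin n) ℝ) (hB : B.IsHermitian) (hPD : B.PosDef)
    (σlbB σubB σlb σub : ℝ) (h0 : 0 < σlbB) (hord : σlbB ≤ σubB)
    (heig : ∀ i, σlbB ≤ hB.eigenvalues i ∧ hB.eigenvalues i ≤ σubB)
    (hσlb : σlb = 1 / σubB) (hσub : σub = 1 / σlbB)
    (x g : EuclideanSpace ℝ (Fin n))
    (α : ℝ) (hα0 : 0 < α) (θ : ℝ) (hθ : θ ∈ Set.Ioo (0 : ℝ) 1)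
    (εf : ℝ) (hεf : 0 ≤ εf) (f fplus : ℝ)
    (hnoise : |f - φ x| + |fplus - φ (x - α • Matrix.toEuclideanLin B⁻¹ g)| ≤ 2 * εf)
    (hsucc : fplus ≤ f - α * θ * ⟪Matrix.toEuclideanLin B⁻¹ g, g⟫ + 2 * εf)
    (τ : ℝ) (hτ : 0 ≤ τ) (η : ℝ) (hη : η ∈ Set.Ioo (0 : ℝ) 1)
    (hg : ‖g - gradient φ x‖ ≤ τ * ‖g‖ ∨ ‖g - gradient φ x‖ ≤ η * ‖gradient φ x‖)
    (ε : ℝ) (hε : 4 * εf ≤ ε) (hgap : ε < φ x - φstar)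
    (m : ℝ) (hm : m = min (1 / (1 + τ) ^ 2) ((1 - η) ^ 2) * (α * θ * σlb * β)) :
    φ (x - α • Matrix.toEuclideanLin B⁻¹ g) - φstar ≤
      (1 - m) * (1 + (2 * εf + |f - φ x| +
        |fplus - φ (x - α • Matrix.toEuclideanLin B⁻¹ g)|) / ε) * (φ x - φstar) :=
  stmt10_general φ β hβ hsc φstar hlb hatt B hB hPD σlbB σubB σlb h0 hord heig hσlb x g α hα0 θ hθ
    εf hεf f fplus hnoise hsucc τ hτ η hη hg ε hε hgap m hm
end
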